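/- For every model σ, every position i ≥ 1 and all data variables x, y: every strictly earlier position j < i satisfies σ(j)(y) = σ(i)(x) (i.e., σ,i ⊨ ¬(x ≉ ◇⁻¹ y)) if and only if either i = 1, or σ(i)(x) = σ(i−1)(y) and σ(j)(y) = σ(j−1)(y) for every j with 2 ≤ j ≤ i−1. Equivalently, ¬(x ≉ ◇⁻¹ y) is logically equivalent to ¬X⁻¹⊤ ∨ (x ≈ X⁻¹ y ∧ G⁻¹(¬X⁻¹⊤ ∨ y ≈ X⁻¹ y)). -/

import Mathlib

/-! Both sides of the first equivalence say that `j ↦ σ(j)(y)` is constant, with value `σ(i)(x)`,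
on the positions before `i`: a sequence is constant on an initial segment iff each term there
equals its predecessor. Unfolding `sat` turns `¬(x ≉ ◇⁻¹ y)` and the past-time formula into the
two sides of that equivalence. -/
namespace LRVGames

/-- A valuation: Boolean variables (named by naturals) to Booleans,
data variables (named by naturals) to the data domain `ℕ`. -/
structure Val where
  bval : ℕ → Bool
  dval : ℕ → ℕ

/-- Formulas of the Logic of Repeating Values (LRV). -/
inductive LRV where
  | tru : LRV
  | bvar : ℕ → LRV
  /-- local test `x ≈ Xʲ y` -/
  | eqX : ℕ → ℤ → ℕ → LRV
  /-- future obligation `x ≈ ◇⟨ψ⟩ y` -/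
  | futEq : ℕ → ℕ → LRV → LRV
  /-- future disequality obligation `x ≉ ◇⟨ψ⟩ y` -/
  | futNeq : ℕ → ℕ → LRV → LRV
  /-- past obligation `x ≈ ◇⁻¹⟨ψ⟩ y` -/
  | pastEq : ℕ → ℕ → LRV → LRV
  /-- past disequality obligation `x ≉ ◇⁻¹⟨ψ⟩ y` -/
  | pastNeq : ℕ → ℕ → LRV → LRV
  | and : LRV → LRV → LRV
  | not : LRV → LRV
  | next : LRV → LRV
  | untl : LRV → LRV → LRV
  | prev : LRV → LRV
  | since : LRV → LRV → LRV
  deriving DecidableEq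

/-- A model: an infinite sequence of valuations (position 0 is the paper's position 1). -/
abbrev Model := ℕ → Val

/-- The satisfaction relation `σ, i ⊨ φ` (0-indexed positions). -/
def sat (σ : Model) : LRV → ℕ → Prop
  | .tru, _ => True
  | .bvar q, i => (σ i).bval q = true
  | .eqX x j y, i => 0 ≤ (i : ℤ) + j ∧ (σ i).dval x = (σ ((i : ℤ) + j).toNat).dval y
  | .futEq x y ψ, i => ∃ j, i < j ∧ (σ i).dval x = (σ j).dval y ∧ sat σ ψ j
  | .futNeq x y ψ, i => ∃ j, i < j ∧ (σ i).dval x ≠ (σ j).dval y ∧ sat σ ψ j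
  | .pastEq x y ψ, i => ∃ j, j < i ∧ (σ i).dval x = (σ j).dval y ∧ sat σ ψ j
  | .pastNeq x y ψ, i => ∃ j, j < i ∧ (σ i).dval x ≠ (σ j).dval y ∧ sat σ ψ j
  | .and a b, i => sat σ a i ∧ sat σ b i
  | .not a, i => ¬ sat σ a i
  | .next a, i => sat σ a (i + 1)
  | .untl a b, i => ∃ j, i ≤ j ∧ sat σ b j ∧ ∀ k, i ≤ k → k < j → sat σ a k
  | .prev a, i => 0 < i ∧ sat σ a (i - 1)
  | .since a b, i => ∃ j, j ≤ i ∧ sat σ b j ∧ ∀ k, j < k → k ≤ i → sat σ a k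

/-- Ownership of variables: `envB q = true` iff Boolean variable `q` is owned by
environment, `envD x = true` iff data variable `x` is owned by environment;
all other variables are owned by system. -/
structure Partition where
  envB : ℕ → Bool
  envD : ℕ → Bool

/-- Combine environment's choice `e` and system's choice `s` into one valuation. -/
def combine (P : Partition) (e s : Val) : Val :=
  ⟨fun q => if P.envB q then e.bval q else s.bval q,
   fun x => if P.envD x then e.dval x else s.dval x⟩

/-- An environment strategy: given the history of rounds played so far,
choose a valuation (only the environment-owned components matter). -/
abbrev EnvStrat := List Val → Val

/-- A system strategy: given the history and environment's current choice,
choose a valuation (only the system-owned components matter). -/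
abbrev SysStrat := List Val → Val → Val

/-- The history of the first `n` rounds of the play of `te` against `ts`. -/
def playPrefix (P : Partition) (te : EnvStrat) (ts : SysStrat) : ℕ → List Val
  | 0 => []
  | n + 1 =>
      let h := playPrefix P te ts n
      h ++ [combine P (te h) (ts h (te h))]

/-- The infinite model resulting from playing `te` against `ts`. -/
def play (P : Partition) (te : EnvStrat) (ts : SysStrat) (n : ℕ) : Val :=
  let h := playPrefix P te ts n
  combine P (te h) (ts h (te h))

/-- System has a winning strategy in the game of repeating values with
winning condition `φ`: some system strategy wins against every environment strategy. -/
def SysWins (P : Partition) (φ : LRV) : Prop :=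
  ∃ ts : SysStrat, ∀ te : EnvStrat, sat (play P te ts) φ 0

/-- Fragment condition `⊤`: every obligation carries the trivial nested formula. -/
def topOnly : LRV → Prop
  | .futEq _ _ ψ => ψ = .tru
  | .futNeq _ _ ψ => ψ = .tru
  | .pastEq _ _ ψ => ψ = .tru
  | .pastNeq _ _ ψ => ψ = .tru
  | .and a b => topOnly a ∧ topOnly b
  | .not a => topOnly a
  | .next a => topOnly a
  | .untl a b => topOnly a ∧ topOnly b
  | .prev a => topOnly a
  | .since a b => topOnly a ∧ topOnly b
  | _ => True

/-- Fragment condition `≈`: no disequality obligations. -/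
def noDiseq : LRV → Prop
  | .futNeq _ _ _ => False
  | .pastNeq _ _ _ => False
  | .futEq _ _ ψ => noDiseq ψ
  | .pastEq _ _ ψ => noDiseq ψ
  | .and a b => noDiseq a ∧ noDiseq b
  | .not a => noDiseq a
  | .next a => noDiseq a
  | .untl a b => noDiseq a ∧ noDiseq b
  | .prev a => noDiseq a
  | .since a b => noDiseq a ∧ noDiseq b
  | _ => True

/-- Fragment condition `←`: no future obligations. -/
def noFut : LRV → Prop
  | .futEq _ _ _ => False
  | .futNeq _ _ _ => False
  | .pastEq _ _ ψ => noFut ψ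
  | .pastNeq _ _ ψ => noFut ψ
  | .and a b => noFut a ∧ noFut b
  | .not a => noFut a
  | .next a => noFut a
  | .untl a b => noFut a ∧ noFut b
  | .prev a => noFut a
  | .since a b => noFut a ∧ noFut b
  | _ => True

/-- Fragment condition `→`: no past obligations. -/
def noPast : LRV → Prop
  | .pastEq _ _ _ => False
  | .pastNeq _ _ _ => False
  | .futEq _ _ ψ => noPast ψ
  | .futNeq _ _ ψ => noPast ψ
  | .and a b => noPast a ∧ noPast b
  | .not a => noPast a
  | .next a => noPast a
  | .untl a b => noPast a ∧ noPast b
  | .prev a => noPast a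
  | .since a b => noPast a ∧ noPast b
  | _ => True

/-- The set of Boolean variables occurring in a formula. -/
def bvars : LRV → Set ℕ
  | .bvar q => {q}
  | .futEq _ _ ψ => bvars ψ
  | .futNeq _ _ ψ => bvars ψ
  | .pastEq _ _ ψ => bvars ψ
  | .pastNeq _ _ ψ => bvars ψ
  | .and a b => bvars a ∪ bvars b
  | .not a => bvars a
  | .next a => bvars a
  | .untl a b => bvars a ∪ bvars b
  | .prev a => bvars a
  | .since a b => bvars a ∪ bvars b
  | _ => ∅

/-- The set of data variables occurring in a formula. -/
def dvars : LRV → Set ℕ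
  | .eqX x _ y => {x, y}
  | .futEq x y ψ => {x, y} ∪ dvars ψ
  | .futNeq x y ψ => {x, y} ∪ dvars ψ
  | .pastEq x y ψ => {x, y} ∪ dvars ψ
  | .pastNeq x y ψ => {x, y} ∪ dvars ψ
  | .and a b => dvars a ∪ dvars b
  | .not a => dvars a
  | .next a => dvars a
  | .untl a b => dvars a ∪ dvars b
  | .prev a => dvars a
  | .since a b => dvars a ∪ dvars b
  | _ => ∅

/-- Every local test `x ≈ Xʲ y` in the formula has `|j| ≤ k`. -/
def locBound (k : ℕ) : LRV → Prop
  | .eqX _ j _ => j.natAbs ≤ k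
  | .futEq _ _ ψ => locBound k ψ
  | .futNeq _ _ ψ => locBound k ψ
  | .pastEq _ _ ψ => locBound k ψ
  | .pastNeq _ _ ψ => locBound k ψ
  | .and a b => locBound k a ∧ locBound k b
  | .not a => locBound k a
  | .next a => locBound k a
  | .untl a b => locBound k a ∧ locBound k b
  | .prev a => locBound k a
  | .since a b => locBound k a ∧ locBound k b
  | _ => True

/-- A Gödel numbering of LRV formulas. -/
def encode : LRV → ℕ
  | .tru => Nat.pair 0 0
  | .bvar q => Nat.pair 1 q
  | .eqX x j y => Nat.pair 2 (Nat.pair x (Nat.pair (Encodable.encode j) y))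
  | .futEq x y ψ => Nat.pair 3 (Nat.pair x (Nat.pair y (encode ψ)))
  | .futNeq x y ψ => Nat.pair 4 (Nat.pair x (Nat.pair y (encode ψ)))
  | .pastEq x y ψ => Nat.pair 5 (Nat.pair x (Nat.pair y (encode ψ)))
  | .pastNeq x y ψ => Nat.pair 6 (Nat.pair x (Nat.pair y (encode ψ)))
  | .and a b => Nat.pair 7 (Nat.pair (encode a) (encode b))
  | .not a => Nat.pair 8 (encode a)
  | .next a => Nat.pair 9 (encode a)
  | .untl a b => Nat.pair 10 (Nat.pair (encode a) (encode b))
  | .prev a => Nat.pair 11 (encode a)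
  | .since a b => Nat.pair 12 (Nat.pair (encode a) (encode b))

/-- Disjunction, as a derived operator. -/
def lor (a b : LRV) : LRV := .not (.and (.not a) (.not b))

/-- `F⁻¹ a`: `a` holds at some position `j ≤ i` (non-strict past "eventually"). -/
def pastF (a : LRV) : LRV := .since .tru a

/-- `G⁻¹ a`: `a` holds at every strictly earlier position. -/
def pastG (a : LRV) : LRV := .not (.prev (pastF (.not a)))

/-- `¬ X⁻¹ ⊤`: we are at the first position. -/
def prevTopN : LRV := .not (.prev .tru)

/-- The formula `¬X⁻¹⊤ ∨ (x ≈ X⁻¹y ∧ G⁻¹(¬X⁻¹⊤ ∨ y ≈ X⁻¹y))`. -/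
def trNegPastNeq (x y : ℕ) : LRV :=
  lor prevTopN (.and (.eqX x (-1) y) (pastG (lor prevTopN (.eqX y (-1) y))))

end LRVGames

theorem apply_eq_apply_zero_of_forall_apply_eq_apply_pred {α : Type*} {f : ℕ → α} {n : ℕ}
    (h : ∀ j, 1 ≤ j → j ≤ n → f j = f (j - 1)) : ∀ j, j ≤ n → f j = f 0
  | 0, _ => rfl
  | j + 1, hj => (h (j + 1) (by omega) hj).trans
      (apply_eq_apply_zero_of_forall_apply_eq_apply_pred h j (by omega))

theorem forall_lt_apply_eq_iff {α : Type*} {f : ℕ → α} {c : α} {n : ℕ} :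
    (∀ j, j < n → f j = c) ↔
      n = 0 ∨ (c = f (n - 1) ∧ ∀ j, 1 ≤ j → j ≤ n - 1 → f j = f (j - 1)) := by
  rcases Nat.eq_zero_or_pos n with rfl | hn
  · simp
  constructor
  · intro h
    refine Or.inr ⟨(h (n - 1) (by omega)).symm, fun j hj₁ hj₂ => ?_⟩
    rw [h j (by omega), h (j - 1) (by omega)]
  · rintro (rfl | ⟨hc, hpred⟩) j hj
    · omega
    · have hconst := apply_eq_apply_zero_of_forall_apply_eq_apply_pred hpred
      rw [hc, hconst j (by omega), hconst (n - 1) le_rfl]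

namespace LRVGames

section Semantics

variable (σ : Model) (i : ℕ)

theorem sat_not_pastNeq_tru (x y : ℕ) :
    sat σ (.not (.pastNeq x y .tru)) i ↔ ∀ j, j < i → (σ j).dval y = (σ i).dval x := by
  simp only [sat, and_true, not_exists, not_and, not_not, eq_comm]

theorem sat_and (a b : LRV) : sat σ (.and a b) i ↔ sat σ a i ∧ sat σ b i := Iff.rfl

theorem sat_lor (a b : LRV) : sat σ (lor a b) i ↔ sat σ a i ∨ sat σ b i := by
  simp only [lor, sat]
  tauto

theorem sat_prevTopN : sat σ prevTopN i ↔ i = 0 := by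
  simp only [prevTopN, sat, and_true, Nat.pos_iff_ne_zero, not_not]

theorem sat_pastG (a : LRV) : sat σ (pastG a) i ↔ ∀ j, j < i → sat σ a j := by
  simp only [pastG, pastF, sat, implies_true, and_true, not_and, not_exists, not_not]
  exact ⟨fun h j hj => h (by omega) j (by omega), fun h _ j hj => h j (by omega)⟩

-- At `i = 0` the index `((0 : ℤ) + -1).toNat = 0` in `sat` is junk; the guard `0 ≤ i + -1` discards it.
theorem sat_eqX_neg_one (x y : ℕ) :
    sat σ (.eqX x (-1) y) i ↔ 0 < i ∧ (σ i).dval x = (σ (i - 1)).dval y := by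
  rw [sat, show ((i : ℤ) + -1).toNat = i - 1 by omega]
  exact and_congr_left' (by omega)

theorem sat_trNegPastNeq (x y : ℕ) :
    sat σ (trNegPastNeq x y) i ↔
      i = 0 ∨ ((σ i).dval x = (σ (i - 1)).dval y ∧
        ∀ j, 1 ≤ j → j ≤ i - 1 → (σ j).dval y = (σ (j - 1)).dval y) := by
  simp only [trNegPastNeq, sat_lor, sat_prevTopN, sat_pastG, sat_eqX_neg_one, sat_and]
  rcases Nat.eq_zero_or_pos i with rfl | hi
  · simp
  have hchain : (∀ j, j < i → j = 0 ∨ 0 < j ∧ (σ j).dval y = (σ (j - 1)).dval y) ↔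
      ∀ j, 1 ≤ j → j ≤ i - 1 → (σ j).dval y = (σ (j - 1)).dval y :=
    ⟨fun h j hj₁ hj₂ => ((h j (by omega)).resolve_left (by omega)).2,
      fun h j hj => (Nat.eq_zero_or_pos j).imp_right fun hj₀ => ⟨hj₀, h j hj₀ (by omega)⟩⟩
  simp only [hi, hi.ne', true_and, false_or, hchain]

end Semantics

/-- For every model `σ`, position `i` and data variables `x, y`:
every strictly earlier position `j < i` satisfies `σ(j)(y) = σ(i)(x)` iff either
`i` is the first position, or `σ(i)(x) = σ(i−1)(y)` and `σ(j)(y) = σ(j−1)(y)`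
for every position `j` with `2 ≤ j ≤ i−1` (positions 0-indexed here, so the
paper's position `j` is index `j - 1`). Equivalently, `¬(x ≉ ◇⁻¹ y)` is
logically equivalent to `¬X⁻¹⊤ ∨ (x ≈ X⁻¹y ∧ G⁻¹(¬X⁻¹⊤ ∨ y ≈ X⁻¹y))`. -/
theorem negated_past_diseq_characterization (σ : Model) (i : ℕ) (x y : ℕ) :
    ((∀ j, j < i → (σ j).dval y = (σ i).dval x) ↔
      (i = 0 ∨ ((σ i).dval x = (σ (i - 1)).dval y ∧
        ∀ j, 1 ≤ j → j ≤ i - 1 → (σ j).dval y = (σ (j - 1)).dval y))) ∧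
    (sat σ (.not (.pastNeq x y .tru)) i ↔ sat σ (trNegPastNeq x y) i) :=
  ⟨forall_lt_apply_eq_iff, by
    rw [sat_not_pastNeq_tru, sat_trNegPastNeq, forall_lt_apply_eq_iff]⟩

end LRVGames
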